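/- arXiv:2108.05495 — 3 statements merged into one kernel-verified Lean document; each statement's English description precedes it below -/
import Mathlib

section
/- In a canonical code on alphabet size σ (a power of two for simplicity), any codeword whose maximal leading run of 1s has length p and which has total length greater than p satisfies: the suffix following position p+1 has length strictly less than log₂ σ, i.e., |C| − p − 1 < log₂ σ. -/
/-!
Follow the leading 1s of `C` down the right spine of the tree to the node where `C` turns left.
The rest `S` of `C` is then a codeword of that node's left subtree, and since lengths do not
decrease from left to right, every leaf of its right subtree has depth at least `|S|` below
it. A full binary tree whose leaves all lie at depth at least `d` has at least `2 ^ d` leaves,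
so together with the leaf reached by `C` the tree has more than `2 ^ |S|` leaves, i.e.
`|S| < log₂ σ`.
-/

inductive BTree where
  | leaf : BTree
  | node : BTree → BTree → BTree

namespace BTree

def codewords : BTree → List (List Bool)
  | .leaf => [[]]
  | .node l r => (codewords l).map (List.cons false) ++ (codewords r).map (List.cons true)

def numLeaves : BTree → ℕ
  | .leaf => 1
  | .node l r => numLeaves l + numLeaves r

/-- Codewords read left to right are strictly increasing lexicographically
with non-decreasing lengths. -/
def Canonical (t : BTree) : Prop :=
  (codewords t).Chain' (fun a b => List.Lex (· < ·) a b) ∧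
  (codewords t).Chain' (fun a b => a.length ≤ b.length)

/-- Length of the maximal leading run of 1-bits. -/
def leadOnes (C : List Bool) : ℕ := (C.takeWhile id).length

theorem one_le_numLeaves (t : BTree) : 1 ≤ numLeaves t := by
  induction t with
  | leaf => rfl
  | node l r ihl _ => exact ihl.trans (Nat.le_add_right _ _)

theorem two_pow_le_numLeaves_of_forall_le_length (t : BTree) (d : ℕ)
    (h : ∀ C ∈ codewords t, d ≤ C.length) : 2 ^ d ≤ numLeaves t := by
  induction t generalizing d with
  | leaf =>
    obtain rfl : d = 0 := by simpa [codewords] using h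
    rfl
  | node l r ihl ihr =>
    cases d with
    | zero => exact one_le_numLeaves _
    | succ d =>
      have hl := ihl d fun C hC => by
        simpa using h (false :: C) (List.mem_append_left _ (List.mem_map_of_mem hC))
      have hr := ihr d fun C hC => by
        simpa using h (true :: C) (List.mem_append_right _ (List.mem_map_of_mem hC))
      rw [numLeaves, pow_succ]
      omega

theorem two_pow_length_lt_numLeaves (t : BTree)
    (hmono : (codewords t).Pairwise (fun a b => a.length ≤ b.length))
    (p : ℕ) (S : List Bool) (hC : List.replicate p true ++ false :: S ∈ codewords t) :
    2 ^ S.length < numLeaves t := by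
  induction t generalizing p with
  | leaf => simp [codewords] at hC
  | node l r _ ihr =>
    rw [codewords, List.pairwise_append, List.pairwise_map, List.pairwise_map] at hmono
    obtain ⟨-, hmono_r, hmono_lr⟩ := hmono
    rcases p with _ | p
    · have hS : S ∈ codewords l := by simpa [codewords] using hC
      have hr : 2 ^ S.length ≤ numLeaves r :=
        two_pow_le_numLeaves_of_forall_le_length r _ fun D hD => by
          simpa using hmono_lr _ (List.mem_map_of_mem hS) _ (List.mem_map_of_mem hD)
      have := one_le_numLeaves l
      rw [numLeaves]
      omega
    · have hC' : List.replicate p true ++ false :: S ∈ codewords r := by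
        simpa [codewords, List.replicate_succ] using hC
      have := ihr (hmono_r.imp fun h => by simpa using h) p hC'
      rw [numLeaves]
      omega

theorem eq_replicate_leadOnes_append_false_cons (C : List Bool) (h : leadOnes C < C.length) :
    C = List.replicate (leadOnes C) true ++ false :: C.drop (leadOnes C + 1) := by
  induction C with
  | nil => simp at h
  | cons b C ih =>
    cases b with
    | false => simp [leadOnes]
    | true =>
      simp only [leadOnes, List.takeWhile_cons, id, if_true, List.length_cons] at h ⊢
      simp only [List.replicate_succ, List.cons_append, List.drop_succ_cons]
      exact congrArg _ (ih (by unfold leadOnes; omega))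

end BTree

open BTree in
theorem stmt9_general (t : BTree) (ht : Canonical t)
    (C : List Bool) (hC : C ∈ codewords t) (hlt : leadOnes C < C.length) :
    ((C.length : ℝ) - (leadOnes C : ℝ) - 1) < Real.logb 2 (numLeaves t : ℝ) := by
  set S := C.drop (leadOnes C + 1)
  have hmono : (codewords t).Pairwise (fun a b => a.length ≤ b.length) := by
    have : IsTrans (List Bool) (fun a b => a.length ≤ b.length) := ⟨fun _ _ _ => Nat.le_trans⟩
    exact List.isChain_iff_pairwise.mp ht.2
  have hS : 2 ^ S.length < numLeaves t :=
    two_pow_length_lt_numLeaves t hmono _ S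
      (eq_replicate_leadOnes_append_false_cons C hlt ▸ hC)
  have hSlen : ((C.length : ℝ) - leadOnes C - 1) = (S.length : ℕ) := by
    rw [List.length_drop]
    push_cast [Nat.sub_sub, Nat.cast_sub hlt]
    ring
  rw [hSlen, Real.lt_logb_iff_rpow_lt one_lt_two (by exact_mod_cast one_le_numLeaves t),
    Real.rpow_natCast]
  exact_mod_cast hS

open BTree in
/-- In a canonical code on `σ` leaves (`σ` a power of two), any codeword whose
maximal leading run of 1s has length `p < |C|` satisfies
`|C| − p − 1 < log₂ σ`. -/
theorem stmt9 (t : BTree) (ht : Canonical t) (hpow : ∃ k : ℕ, numLeaves t = 2 ^ k)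
    (C : List Bool) (hC : C ∈ codewords t) (hlt : leadOnes C < C.length) :
    ((C.length : ℝ) - (leadOnes C : ℝ) - 1) < Real.logb 2 (numLeaves t : ℝ) :=
  stmt9_general t ht C hC hlt
end

section
/- Suppose each symbol of a text of length n requires decoding time at most a·log₂ log₂ σ + b if its Huffman codeword length ℓ satisfies ℓ ≤ 2·log_φ σ (where φ is the golden ratio and the decode time is O(log ℓ) via exponential search), and time at most a·log₂ log₂ n + b otherwise. If the total number of text positions whose codeword length exceeds 2·log_φ σ is at most C·n/σ, and σ ≥ log₂ n, then the total decoding time over all n symbols is O(n·log log σ). -/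
open Real Finset

lemma logb2_le_self {x : ℝ} (hx : 1 ≤ x) : Real.logb 2 x ≤ x := by
  have hx0 : (0:ℝ) < x := by linarith
  have ht : Real.sqrt x ^ 2 = x := Real.sq_sqrt hx0.le
  have ht1 : (0:ℝ) < Real.sqrt x := Real.sqrt_pos.mpr hx0
  have h1 : Real.log (Real.sqrt x) ≤ Real.sqrt x - 1 :=
    Real.log_le_sub_one_of_pos ht1
  have h2 : Real.log (Real.sqrt x) = Real.log x / 2 := Real.log_sqrt hx0.le
  have hl2 : (0.6931471803:ℝ) < Real.log 2 := Real.log_two_gt_d9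
  have h3 : 0 ≤ Real.sqrt x ^ 2 * Real.log 2 - 2 * Real.sqrt x + 2 := by
    nlinarith [sq_nonneg (Real.sqrt x * Real.log 2 - 1)]
  have h4 : Real.sqrt x ^ 2 * Real.log 2 = x * Real.log 2 := by rw [ht]
  rw [Real.logb, div_le_iff₀ (by linarith)]
  linarith

lemma logb2_mono {x y : ℝ} (hx : 0 < x) (hxy : x ≤ y) :
    Real.logb 2 x ≤ Real.logb 2 y :=
  Real.logb_le_logb_of_le (by norm_num) hx hxy

lemma logb2_four : Real.logb 2 (4:ℝ) = 2 := by
  rw [show (4:ℝ) = 2 ^ (2:ℕ) by norm_num, Real.logb_pow,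
    Real.logb_self_eq_one (by norm_num)]
  norm_num

set_option maxHeartbeats 1000000 in
open Real Finset in
/-- If each of the `n` text symbols decodes in time `a·log₂ log₂ σ + b` when
its codeword length is at most `2·log_φ σ` and in time `a·log₂ log₂ n + b`
otherwise, and at most `C·n/σ` positions fall into the latter case, with
`σ ≥ log₂ n`, then the total decoding time is `O(n · log log σ)`. -/
theorem stmt16 (a b C : ℝ) (ha : 0 ≤ a) (hb : 0 ≤ b) (hC : 0 ≤ C)
    (φ : ℝ) (hφ : φ = (1 + Real.sqrt 5) / 2) :
    ∃ D : ℝ, 0 < D ∧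
      ∀ (n σ : ℕ) (len time : Fin n → ℝ),
        4 ≤ n → 4 ≤ σ → Real.logb 2 (n : ℝ) ≤ (σ : ℝ) →
        (∀ i, 0 ≤ time i) →
        (∀ i, len i ≤ 2 * Real.logb φ (σ : ℝ) →
          time i ≤ a * Real.logb 2 (Real.logb 2 (σ : ℝ)) + b) →
        (∀ i, time i ≤ a * Real.logb 2 (Real.logb 2 (n : ℝ)) + b) →
        ((univ.filter (fun i => 2 * Real.logb φ (σ : ℝ) < len i)).card : ℝ) ≤
          C * (n : ℝ) / (σ : ℝ) →
        ∑ i, time i ≤ D * (n : ℝ) * Real.logb 2 (Real.logb 2 (σ : ℝ)) := by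
  refine ⟨(a + b) * (1 + C) + 1, by positivity, ?_⟩
  intro n σ len time hn hσ hlog htpos hsmall hall hcard
  have hσ4 : (4:ℝ) ≤ (σ:ℝ) := by exact_mod_cast hσ
  have hn4 : (4:ℝ) ≤ (n:ℝ) := by exact_mod_cast hn
  have hσ0 : (0:ℝ) < (σ:ℝ) := by linarith
  have hn0 : (0:ℝ) < (n:ℝ) := by linarith
  have h2σ : 2 ≤ Real.logb 2 (σ:ℝ) := by
    have := logb2_mono (show (0:ℝ) < 4 by norm_num) hσ4
    rwa [logb2_four] at this
  have h2n : 2 ≤ Real.logb 2 (n:ℝ) := by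
    have := logb2_mono (show (0:ℝ) < 4 by norm_num) hn4
    rwa [logb2_four] at this
  set L := Real.logb 2 (Real.logb 2 (σ:ℝ)) with hL
  have hL1 : 1 ≤ L := by
    have := logb2_mono (x := 2) (by norm_num) h2σ
    rwa [Real.logb_self_eq_one (by norm_num)] at this
  have hln : Real.logb 2 (Real.logb 2 (n:ℝ)) ≤ Real.logb 2 (σ:ℝ) :=
    logb2_mono (by linarith) hlog
  have hlogσ_le : Real.logb 2 (σ:ℝ) ≤ (σ:ℝ) := logb2_le_self (by linarith)
  set P : Fin n → Prop := fun i => 2 * Real.logb φ (σ:ℝ) < len i with hP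
  have hsplit := Finset.sum_filter_add_sum_filter_not (univ : Finset (Fin n)) P time
  have hbig : ∑ i ∈ univ.filter P, time i ≤
      (C * (n:ℝ) / (σ:ℝ)) * (a * Real.logb 2 (σ:ℝ) + b) := by
    have hbound : ∀ i ∈ univ.filter P, time i ≤ a * Real.logb 2 (σ:ℝ) + b := by
      intro i _
      calc time i ≤ a * Real.logb 2 (Real.logb 2 (n:ℝ)) + b := hall i
        _ ≤ a * Real.logb 2 (σ:ℝ) + b := by nlinarith
    have h := Finset.sum_le_card_nsmul (univ.filter P) time _ hbound
    rw [nsmul_eq_mul] at h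
    refine h.trans (mul_le_mul_of_nonneg_right hcard ?_)
    nlinarith
  have hsmallsum : ∑ i ∈ univ.filter (fun i => ¬ P i), time i ≤ (n:ℝ) * (a * L + b) := by
    have hbound : ∀ i ∈ univ.filter (fun i => ¬ P i), time i ≤ a * L + b := by
      intro i hi
      simp only [Finset.mem_filter, hP, not_lt] at hi
      exact hsmall i hi.2
    have h := Finset.sum_le_card_nsmul (univ.filter (fun i => ¬ P i)) time _ hbound
    rw [nsmul_eq_mul] at h
    refine h.trans (mul_le_mul_of_nonneg_right ?_ (by nlinarith))
    have hc := Finset.card_filter_le (univ : Finset (Fin n)) (fun i => ¬ P i)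
    simp only [Finset.card_univ, Fintype.card_fin] at hc
    exact_mod_cast hc
  have hbig2 : (C * (n:ℝ) / (σ:ℝ)) * (a * Real.logb 2 (σ:ℝ) + b) ≤ C * (a + b) * (n:ℝ) := by
    rw [div_mul_eq_mul_div, div_le_iff₀ hσ0]
    have h1 : a * Real.logb 2 (σ:ℝ) ≤ a * (σ:ℝ) := by nlinarith
    have h2 : b ≤ b * (σ:ℝ) := by nlinarith
    nlinarith [mul_nonneg hC hn0.le]
  have hsum : ∑ i, time i ≤ (n:ℝ) * (a * L + b) + C * (a + b) * (n:ℝ) := by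
    rw [← hsplit]; linarith
  have hfin : (n:ℝ) * (a * L + b) + C * (a + b) * (n:ℝ) ≤
      ((a + b) * (1 + C) + 1) * (n:ℝ) * L := by
    nlinarith [mul_nonneg (mul_nonneg hC (by linarith : (0:ℝ) ≤ a + b)) hn0.le,
      mul_nonneg hb hn0.le, mul_nonneg hn0.le (by linarith : (0:ℝ) ≤ L - 1)]
  linarith
end

section
/- In a full binary tree whose leaf depths read left to right are non-decreasing, the codewords (ℓ-bit binary integers) of the leaves at any fixed depth ℓ, enumerated left to right, form a block of consecutive integers. -/
namespace BTree

/-- The value of a codeword as a binary integer (most significant bit first). -/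
def val (C : List Bool) : ℕ := C.foldl (fun n b => 2 * n + b.toNat) 0

end BTree


namespace BTree

lemma valAux (C : List Bool) (n : ℕ) :
    C.foldl (fun n b => 2 * n + b.toNat) n = n * 2 ^ C.length + val C := by
  induction C generalizing n with
  | nil => simp [val]
  | cons b C ih =>
    have hv : val (b :: C) = b.toNat * 2 ^ C.length + val C := by
      show C.foldl _ (2 * 0 + b.toNat) = _
      rw [ih]; ring
    rw [List.foldl_cons, ih, hv, List.length_cons]
    ring

lemma val_cons (b : Bool) (C : List Bool) : val (b :: C) = b.toNat * 2 ^ C.length + val C := by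
  show C.foldl _ (2 * 0 + b.toNat) = _
  rw [valAux]; ring

lemma val_append (P Q : List Bool) : val (P ++ Q) = val P * 2 ^ Q.length + val Q := by
  show (P ++ Q).foldl _ 0 = _
  rw [List.foldl_append, valAux]
  rfl

lemma val_rep_false (a : ℕ) : val (List.replicate a false) = 0 := by
  induction a with
  | zero => rfl
  | succ n ih => rw [List.replicate_succ, val_cons, ih]; simp

lemma val_rep_true (a : ℕ) : val (List.replicate a true) = 2 ^ a - 1 := by
  induction a with
  | zero => rfl
  | succ n ih =>
    rw [List.replicate_succ, val_cons, ih]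
    have : 1 ≤ 2 ^ n := Nat.one_le_two_pow
    simp only [List.length_replicate, Bool.toNat_true, pow_succ]
    omega

lemma codewords_ne_nil (t : BTree) : codewords t ≠ [] := by
  induction t with
  | leaf => simp [codewords]
  | node l r ihl ihr =>
    rw [codewords]
    intro h
    rcases List.append_eq_nil_iff.mp h with ⟨h1, -⟩
    exact ihl (List.map_eq_nil_iff.mp h1)

lemma head?_append_of_ne_nil {α : Type*} (l₁ l₂ : List α) (h : l₁ ≠ []) :
    (l₁ ++ l₂).head? = l₁.head? := by
  cases l₁ with
  | nil => exact absurd rfl h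
  | cons a t => simp

lemma exists_getLast (t : BTree) : ∃ n, (codewords t).getLast? = some (List.replicate n true) := by
  induction t with
  | leaf => exact ⟨0, rfl⟩
  | node l r ihl ihr =>
    obtain ⟨n, hn⟩ := ihr
    refine ⟨n + 1, ?_⟩
    rw [codewords, List.getLast?_append_of_ne_nil _ (by simp [codewords_ne_nil r]),
      List.getLast?_map, hn]
    rfl

lemma exists_head (t : BTree) : ∃ n, (codewords t).head? = some (List.replicate n false) := by
  induction t with
  | leaf => exact ⟨0, rfl⟩
  | node l r ihl ihr =>
    obtain ⟨n, hn⟩ := ihl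
    refine ⟨n + 1, ?_⟩
    rw [codewords, head?_append_of_ne_nil _ _ (by simp [codewords_ne_nil l]),
      List.head?_map, hn]
    rfl

lemma adj_structure (t : BTree) : ∀ i : ℕ, ∀ A B : List Bool,
    (codewords t)[i]? = some A → (codewords t)[i+1]? = some B →
    ∃ P a b, A = P ++ false :: List.replicate a true ∧ B = P ++ true :: List.replicate b false := by
  induction t with
  | leaf =>
    intro i A B hA hB
    simp [codewords] at hB
  | node l r ihl ihr =>
    intro i A B hA hB
    rw [codewords, List.getElem?_append, List.length_map] at hA hB
    by_cases h1 : i + 1 < (codewords l).length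
    · rw [if_pos (by omega)] at hA
      rw [if_pos h1] at hB
      rw [List.getElem?_map] at hA hB
      cases hA' : (codewords l)[i]? with
      | none => rw [hA'] at hA; simp at hA
      | some A' =>
        cases hB' : (codewords l)[i+1]? with
        | none => rw [hB'] at hB; simp at hB
        | some B' =>
          rw [hA'] at hA; rw [hB'] at hB
          simp only [Option.map_some, Option.some_inj] at hA hB
          obtain ⟨P, a, b, hPA, hPB⟩ := ihl i A' B' hA' hB'
          exact ⟨false :: P, a, b, by simp [← hA, hPA], by simp [← hB, hPB]⟩
    · by_cases h2 : i < (codewords l).length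
      · -- boundary
        have hi : i = (codewords l).length - 1 := by omega
        rw [if_pos h2] at hA
        rw [if_neg h1, show i + 1 - (codewords l).length = 0 by omega] at hB
        obtain ⟨a, ha⟩ := exists_getLast l
        obtain ⟨b, hb⟩ := exists_head r
        rw [List.getElem?_map, hi, ← List.getLast?_eq_getElem?, ha] at hA
        rw [List.getElem?_map, ← List.head?_eq_getElem?, hb] at hB
        simp only [Option.map_some, Option.some_inj] at hA hB
        exact ⟨[], a, b, by simp [← hA], by simp [← hB]⟩
      · rw [if_neg h2] at hA
        rw [if_neg h1, show i + 1 - (codewords l).length = (i - (codewords l).length) + 1 by omega]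
          at hB
        rw [List.getElem?_map] at hA hB
        cases hA' : (codewords r)[i - (codewords l).length]? with
        | none => rw [hA'] at hA; simp at hA
        | some A' =>
          cases hB' : (codewords r)[i - (codewords l).length + 1]? with
          | none => rw [hB'] at hB; simp at hB
          | some B' =>
            rw [hA'] at hA; rw [hB'] at hB
            simp only [Option.map_some, Option.some_inj] at hA hB
            obtain ⟨P, a, b, hPA, hPB⟩ := ihr _ A' B' hA' hB'
            exact ⟨true :: P, a, b, by simp [← hA, hPA], by simp [← hB, hPB]⟩

instance : IsTrans (List Bool) (fun a b => a.length ≤ b.length) :=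
  ⟨fun _ _ _ => le_trans⟩

lemma filter_nil_of_big {ℓ : ℕ} {y : List Bool} {ys : List (List Bool)}
    (h : List.Chain' (fun a b => a.length ≤ b.length) (y :: ys)) (hy : ℓ < y.length) :
    (y :: ys).filter (fun C => C.length = ℓ) = [] := by
  rw [List.filter_eq_nil_iff]
  intro z hz
  simp only [decide_eq_true_eq]
  rcases List.mem_cons.mp hz with rfl | hz'
  · omega
  · have hp := List.isChain_iff_pairwise.mp h
    have := (List.pairwise_cons.mp hp).1 z hz'
    omega

lemma filter_adj {L : List (List Bool)}
    (h : L.Chain' (fun a b => a.length ≤ b.length)) (ℓ : ℕ) :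
    ∀ i : ℕ, ∀ A B : List Bool,
    (L.filter (fun C => C.length = ℓ))[i]? = some A →
    (L.filter (fun C => C.length = ℓ))[i+1]? = some B →
    ∃ j, L[j]? = some A ∧ L[j+1]? = some B := by
  induction L with
  | nil => intro i A B hA; simp at hA
  | cons x xs ih =>
    intro i A B hA hB
    have htail : xs.Chain' (fun a b => a.length ≤ b.length) := h.tail
    by_cases hx : x.length = ℓ
    · rw [List.filter_cons_of_pos (by simpa using hx)] at hA hB
      cases i with
      | zero =>
        simp only [List.getElem?_cons_zero, Option.some_inj] at hA
        simp only [List.getElem?_cons_succ] at hB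
        cases xs with
        | nil => simp at hB
        | cons y ys =>
          by_cases hy : y.length = ℓ
          · rw [List.filter_cons_of_pos (by simpa using hy)] at hB
            simp only [List.getElem?_cons_zero, Option.some_inj] at hB
            exact ⟨0, by simp [hA], by simp [hB]⟩
          · have hyℓ : ℓ < y.length := by
              have h2 := (List.isChain_cons_cons.mp h).1
              omega
            rw [filter_nil_of_big htail hyℓ] at hB
            simp at hB
      | succ k =>
        simp only [List.getElem?_cons_succ] at hA hB
        obtain ⟨j, hj1, hj2⟩ := ih htail k A B hA hB
        exact ⟨j + 1, by simpa using hj1, by simpa using hj2⟩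
    · rw [List.filter_cons_of_neg (by simpa using hx)] at hA hB
      obtain ⟨j, hj1, hj2⟩ := ih htail i A B hA hB
      exact ⟨j + 1, by simpa using hj1, by simpa using hj2⟩

end BTree

open BTree in
/-- In a full binary tree whose leaf depths read left to right are
non-decreasing, the codewords of the leaves at any fixed depth `ℓ`, enumerated
left to right, form a block of consecutive `ℓ`-bit integers. -/
theorem stmt18 (t : BTree)
    (hmono : (codewords t).Chain' (fun a b => a.length ≤ b.length)) (ℓ : ℕ) :
    ∀ i : ℕ, ∀ A B : List Bool,
      ((codewords t).filter (fun C => C.length = ℓ))[i]? = some A →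
      ((codewords t).filter (fun C => C.length = ℓ))[i + 1]? = some B →
      val B = val A + 1 := by
  intro i A B hA hB
  have hAlen : A.length = ℓ := by
    have hmem : A ∈ (codewords t).filter (fun C => C.length = ℓ) := List.mem_of_getElem? hA
    simpa using (List.mem_filter.mp hmem).2
  have hBlen : B.length = ℓ := by
    have hmem : B ∈ (codewords t).filter (fun C => C.length = ℓ) := List.mem_of_getElem? hB
    simpa using (List.mem_filter.mp hmem).2
  obtain ⟨j, hj1, hj2⟩ := filter_adj hmono ℓ i A B hA hB
  obtain ⟨P, a, b, rfl, rfl⟩ := adj_structure t j A B hj1 hj2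
  have hab : a = b := by
    simp only [List.length_append, List.length_cons, List.length_replicate] at hAlen hBlen
    omega
  subst hab
  rw [val_append, val_append, val_cons, val_cons, val_rep_true, val_rep_false]
  have h1 : 1 ≤ 2 ^ a := Nat.one_le_two_pow
  simp only [List.length_cons, List.length_replicate, Bool.toNat_true, Bool.toNat_false]
  omega
end
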